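/- arXiv:1506.09128 — 2 statements merged into one kernel-verified Lean document; each statement's English description precedes it below -/
import Mathlib

section
/- Let f : ℝ → ℂ be a Schwartz function, let a, b be real numbers with 0 < a < b, and let n, k be nonnegative integers. Then there is a constant C > 0 (depending on f, a, b, n, k) such that for every s ∈ ℂ with a ≤ Re(s) ≤ b one has |s|^n · |(d/ds)^k f̃(s)| ≤ C, where (d/ds)^k f̃ denotes the k-th complex derivative of the Mellin transform f̃ of f. -/
/-!
Differentiating under the integral sign, `(d/ds)^k f̃` is the Mellin transform of
`(log t)^k f(t)`. Integration by parts gives `s · M[h](s) = -M[t h'](s)`, and the Euler operator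
`t d/dt` sends `(log t)^j g` (with `g` Schwartz) to `j (log t)^(j-1) g + (log t)^j (t g')`, where
`t g'` is again Schwartz. By induction on `n`, `s^n (d/ds)^k f̃(s)` is therefore a finite
combination of Mellin transforms of functions `(log t)^j g`, and each of these is bounded on the
strip `a ≤ Re s ≤ b` by `∫ (t^(a-1) + t^(b-1)) |(log t)^j g(t)| dt`.
-/

open MeasureTheory Complex Set Filter Asymptotics Topology

variable {E : Type*} [NormedAddCommGroup E] [NormedSpace ℂ E]

lemma norm_ofReal_cpow_smul {t : ℝ} (ht : 0 < t) (z : ℂ) (x : E) :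
    ‖(t : ℂ) ^ z • x‖ = t ^ z.re * ‖x‖ := by
  rw [norm_smul, norm_cpow_eq_rpow_re_of_pos ht]

lemma isBigO_ofReal_cpow_rpow_re {l : Filter ℝ} (hl : ∀ᶠ t in l, 0 < t) (s : ℂ) :
    (fun t : ℝ => (t : ℂ) ^ s) =O[l] (· ^ s.re) :=
  IsBigO.of_bound 1 <| hl.mono fun t ht => by
    rw [norm_cpow_eq_rpow_re_of_pos ht, Real.norm_of_nonneg (Real.rpow_nonneg ht.le _), one_mul]

lemma tendsto_cpow_smul_atTop_of_isBigO_rpow {f : ℝ → E} {a : ℝ} {s : ℂ}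
    (hf : f =O[atTop] (· ^ (-a))) (hs : s.re < a) :
    Tendsto (fun t : ℝ => (t : ℂ) ^ s • f t) atTop (𝓝 0) := by
  refine IsBigO.trans_tendsto ?_ (tendsto_rpow_neg_atTop (sub_pos.2 hs))
  refine ((isBigO_ofReal_cpow_rpow_re (eventually_gt_atTop 0) s).smul hf).congr' .rfl ?_
  filter_upwards [eventually_gt_atTop 0] with t ht
  rw [smul_eq_mul, ← Real.rpow_add ht, neg_sub, sub_eq_add_neg]

lemma tendsto_cpow_smul_nhdsGT_zero_of_isBigO_rpow {f : ℝ → E} {b : ℝ} {s : ℂ}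
    (hf : f =O[𝓝[>] 0] (· ^ (-b))) (hs : b < s.re) :
    Tendsto (fun t : ℝ => (t : ℂ) ^ s • f t) (𝓝[>] 0) (𝓝 0) := by
  have hlim : Tendsto (· ^ (s.re - b)) (𝓝[>] (0 : ℝ)) (𝓝 0) := by
    simpa [Real.zero_rpow (sub_pos.2 hs).ne'] using
      (Real.continuousAt_rpow_const 0 _ (Or.inr (sub_pos.2 hs).le)).tendsto.mono_left
        nhdsWithin_le_nhds
  refine IsBigO.trans_tendsto ?_ hlim
  refine ((isBigO_ofReal_cpow_rpow_re self_mem_nhdsWithin s).smul hf).congr' .rfl ?_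
  filter_upwards [self_mem_nhdsWithin] with t ht
  rw [smul_eq_mul, ← Real.rpow_add ht, sub_eq_add_neg]

lemma MellinConvergent.add {f g : ℝ → E} {s : ℂ} (hf : MellinConvergent f s)
    (hg : MellinConvergent g s) : MellinConvergent (fun t => f t + g t) s := by
  unfold MellinConvergent at *
  simp only [smul_add]
  exact hf.add hg

lemma mellin_add {f g : ℝ → E} {s : ℂ} (hf : MellinConvergent f s)
    (hg : MellinConvergent g s) :
    mellin (fun t => f t + g t) s = mellin f s + mellin g s := by
  simp only [mellin, smul_add]
  exact integral_add hf hg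

lemma rpow_le_rpow_add_rpow_of_mem_Icc {t a b σ : ℝ} (ht : 0 < t) (hσ : σ ∈ Icc a b) :
    t ^ σ ≤ t ^ a + t ^ b := by
  rcases le_total t 1 with h | h
  · linarith [Real.rpow_le_rpow_of_exponent_ge ht h hσ.1, Real.rpow_nonneg ht.le b]
  · linarith [Real.rpow_le_rpow_of_exponent_le h hσ.2, Real.rpow_nonneg ht.le a]

lemma norm_mellin_le_of_re_mem_Icc {f : ℝ → E} {a b : ℝ} {s : ℂ}
    (ha : MellinConvergent f a) (hb : MellinConvergent f b) (hs : s.re ∈ Icc a b) :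
    ‖mellin f s‖ ≤ ∫ t in Ioi (0 : ℝ),
      ‖(t : ℂ) ^ ((a : ℂ) - 1) • f t‖ + ‖(t : ℂ) ^ ((b : ℂ) - 1) • f t‖ := by
  refine norm_integral_le_of_norm_le (ha.norm.add hb.norm) ?_
  filter_upwards [ae_restrict_mem measurableSet_Ioi] with t (ht : 0 < t)
  simp only [norm_ofReal_cpow_smul ht, sub_re, ofReal_re, one_re, ← add_mul]
  gcongr
  exact rpow_le_rpow_add_rpow_of_mem_Icc ht ⟨by linarith [hs.1], by linarith [hs.2]⟩

/-- `θf` plays the role of `t f'(t)`: this is integration by parts against `t ^ s`. -/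
lemma mellin_eq_neg_mul_mellin_of_hasDerivAt {f θf : ℝ → ℂ} {s : ℂ}
    (hf : ∀ t ∈ Ioi (0 : ℝ), HasDerivAt f (θf t / t) t)
    (hfs : MellinConvergent f s) (hθfs : MellinConvergent θf s)
    (h_zero : Tendsto (fun t : ℝ => (t : ℂ) ^ s * f t) (𝓝[>] 0) (𝓝 0))
    (h_top : Tendsto (fun t : ℝ => (t : ℂ) ^ s * f t) atTop (𝓝 0)) :
    mellin θf s = -(s * mellin f s) := by
  have hpow : ∀ t ∈ Ioi (0 : ℝ),
      HasDerivAt (fun x : ℝ => (x : ℂ) ^ s) (s * (t : ℂ) ^ (s - 1)) t :=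
    fun t (ht : 0 < t) => by
      simpa using ((hasDerivAt_id (t : ℂ)).cpow_const (ofReal_mem_slitPlane.2 ht)).comp_ofReal
  have hcpow : ∀ t ∈ Ioi (0 : ℝ), (t : ℂ) ^ s * (θf t / t) = (t : ℂ) ^ (s - 1) * θf t :=
    fun t (ht : 0 < t) => by
      rw [cpow_sub _ _ (ofReal_ne_zero.2 ht.ne'), cpow_one]
      ring
  have hibp := integral_Ioi_mul_deriv_eq_deriv_mul hpow hf
    (hθfs.congr_fun (fun t ht => (hcpow t ht).symm) measurableSet_Ioi)
    (IntegrableOn.congr_fun (hfs.const_mul s)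
      (fun t _ => by simp only [Pi.mul_apply, smul_eq_mul]; ring) measurableSet_Ioi)
    h_zero h_top
  simp only [mellin, smul_eq_mul]
  rw [← setIntegral_congr_fun measurableSet_Ioi hcpow, hibp, sub_zero, zero_sub]
  simp only [mul_assoc, integral_const_mul]

namespace SchwartzMap

variable {F : Type*} [NormedAddCommGroup F] [NormedSpace ℝ F]

noncomputable def eulerCLM : 𝓢(ℝ, F) →L[ℝ] 𝓢(ℝ, F) :=
  smulLeftCLM F (fun x : ℝ => x) ∘L derivCLM ℝ F

lemma eulerCLM_apply (g : 𝓢(ℝ, F)) (x : ℝ) : eulerCLM g x = x • deriv g x := by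
  simp [eulerCLM, Function.HasTemperateGrowth.id']

lemma isBigO_log_pow_smul_atTop (g : 𝓢(ℝ, F)) (j : ℕ) (A : ℝ) :
    (fun t => Real.log t ^ j • g t) =O[atTop] (· ^ (-A)) := by
  induction j generalizing A with
  | zero =>
    simp only [pow_zero, one_smul]
    refine ((g.isBigO_cocompact_rpow (-A)).mono atTop_le_cocompact).congr' .rfl ?_
    filter_upwards [eventually_ge_atTop 0] with t ht
    rw [Real.norm_of_nonneg ht]
  | succ j ih =>
    simpa only [pow_succ', mul_smul] using isBigO_rpow_top_log_smul (lt_add_one A) (ih (A + 1))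

lemma isBigO_log_pow_smul_nhdsGT_zero (g : 𝓢(ℝ, F)) (j : ℕ) {ε : ℝ} (hε : 0 < ε) :
    (fun t => Real.log t ^ j • g t) =O[𝓝[>] 0] (· ^ (-ε)) := by
  induction j generalizing ε with
  | zero =>
    simp only [pow_zero, one_smul]
    have h_one : (fun _ => (1 : ℝ)) =O[𝓝[>] 0] (fun t : ℝ => t ^ (-ε)) :=
      (isBigO_const_left_iff_pos_le_norm one_ne_zero).2 ⟨1, one_pos,
        ((tendsto_rpow_neg_nhdsGT_zero (neg_neg_of_pos hε)).eventually_ge_atTop 1).mono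
          fun t ht => ht.trans (Real.le_norm_self _)⟩
    exact (((g.continuous.tendsto 0).isBigO_one ℝ).mono nhdsWithin_le_nhds).trans h_one
  | succ j ih =>
    simpa only [pow_succ', mul_smul] using
      isBigO_rpow_zero_log_smul (half_lt_self hε) (ih (half_pos hε))

lemma continuousOn_log_pow_smul (g : 𝓢(ℝ, F)) (j : ℕ) :
    ContinuousOn (fun t => Real.log t ^ j • g t) (Ioi 0) :=
  ((Real.continuousOn_log.mono fun _ ht => ne_of_gt ht).pow j).smul g.continuous.continuousOn

lemma mellinConvergent_log_pow_smul (g : 𝓢(ℝ, E)) (j : ℕ) {s : ℂ} (hs : 0 < s.re) :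
    MellinConvergent (fun t => Real.log t ^ j • g t) s :=
  mellinConvergent_of_isBigO_rpow ((continuousOn_log_pow_smul g j).locallyIntegrableOn
    measurableSet_Ioi) (isBigO_log_pow_smul_atTop g j _) (lt_add_one _)
    (isBigO_log_pow_smul_nhdsGT_zero g j (half_pos hs)) (half_lt_self hs)

lemma hasDerivAt_mellin_log_pow_smul (g : 𝓢(ℝ, E)) (j : ℕ) {s : ℂ} (hs : 0 < s.re) :
    HasDerivAt (mellin fun t => Real.log t ^ j • g t)
      (mellin (fun t => Real.log t ^ (j + 1) • g t) s) s := by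
  simpa only [pow_succ', mul_smul] using (mellin_hasDerivAt_of_isBigO_rpow
    ((continuousOn_log_pow_smul g j).locallyIntegrableOn measurableSet_Ioi)
    (isBigO_log_pow_smul_atTop g j _) (lt_add_one _)
    (isBigO_log_pow_smul_nhdsGT_zero g j (half_pos hs)) (half_lt_self hs)).2

lemma iteratedDeriv_mellin (g : 𝓢(ℝ, E)) (k : ℕ) {s : ℂ} (hs : 0 < s.re) :
    iteratedDeriv k (mellin g) s = mellin (fun t => Real.log t ^ k • g t) s := by
  induction k generalizing s with
  | zero => simp
  | succ k ih =>
    have h_eq : iteratedDeriv k (mellin g) =ᶠ[𝓝 s] mellin fun t => Real.log t ^ k • g t :=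
      eventually_of_mem ((isOpen_lt continuous_const continuous_re).mem_nhds hs) fun z hz => ih hz
    rw [iteratedDeriv_succ, h_eq.deriv_eq, (hasDerivAt_mellin_log_pow_smul g k hs).deriv]

/-- For `j = 0` the truncated exponent `j - 1` is harmless: its coefficient is `0`. -/
lemma mul_mellin_log_pow_smul (g : 𝓢(ℝ, ℂ)) (j : ℕ) {s : ℂ} (hs : 0 < s.re) :
    s * mellin (fun t => Real.log t ^ j • g t) s =
      -((j : ℂ) * mellin (fun t => Real.log t ^ (j - 1) • g t) s +
        mellin (fun t => Real.log t ^ j • eulerCLM g t) s) := by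
  have hderiv : ∀ t ∈ Ioi (0 : ℝ), HasDerivAt (fun t => Real.log t ^ j • g t)
      (((j : ℂ) • (Real.log t ^ (j - 1) • g t) + Real.log t ^ j • eulerCLM g t) / t) t := by
    intro t (ht : 0 < t)
    refine (((Real.hasDerivAt_log ht.ne').pow j).smul g.differentiableAt.hasDerivAt).congr_deriv ?_
    have ht' : (t : ℂ) ≠ 0 := ofReal_ne_zero.2 ht.ne'
    simp only [Pi.pow_apply, eulerCLM_apply, real_smul, smul_eq_mul]
    push_cast
    field_simp
    ring
  have hθ := mellin_eq_neg_mul_mellin_of_hasDerivAt hderiv (mellinConvergent_log_pow_smul g j hs)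
    (((mellinConvergent_log_pow_smul g (j - 1) hs).const_smul (j : ℂ)).add
      (mellinConvergent_log_pow_smul (eulerCLM g) j hs))
    (tendsto_cpow_smul_nhdsGT_zero_of_isBigO_rpow
      (isBigO_log_pow_smul_nhdsGT_zero g j (half_pos hs)) (half_lt_self hs))
    (tendsto_cpow_smul_atTop_of_isBigO_rpow (isBigO_log_pow_smul_atTop g j _) (lt_add_one _))
  rw [mellin_add ((mellinConvergent_log_pow_smul g (j - 1) hs).const_smul (j : ℂ))
    (mellinConvergent_log_pow_smul (eulerCLM g) j hs), mellin_const_smul, smul_eq_mul] at hθ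
  linear_combination hθ

lemma exists_bound_pow_mul_mellin_log_pow_smul {a : ℝ} (ha : 0 < a) (b : ℝ) (n j : ℕ)
    (g : 𝓢(ℝ, ℂ)) : ∃ C, ∀ s : ℂ, a ≤ s.re → s.re ≤ b →
      ‖s‖ ^ n * ‖mellin (fun t => Real.log t ^ j • g t) s‖ ≤ C := by
  induction n generalizing j g with
  | zero =>
    have hb : 0 < max a b := ha.trans_le (le_max_left a b)
    simp only [pow_zero, one_mul]
    exact ⟨_, fun s hsa hsb => norm_mellin_le_of_re_mem_Icc
      (mellinConvergent_log_pow_smul g j (by simpa using ha))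
      (mellinConvergent_log_pow_smul g j (by simpa using hb))
      ⟨hsa, hsb.trans (le_max_right a b)⟩⟩
  | succ n ih =>
    obtain ⟨C₁, hC₁⟩ := ih (j - 1) g
    obtain ⟨C₂, hC₂⟩ := ih j (eulerCLM g)
    refine ⟨j * C₁ + C₂, fun s hsa hsb => ?_⟩
    calc ‖s‖ ^ (n + 1) * ‖mellin (fun t => Real.log t ^ j • g t) s‖
        = ‖s‖ ^ n * ‖s * mellin (fun t => Real.log t ^ j • g t) s‖ := by
          rw [pow_succ, norm_mul, mul_assoc]
      _ ≤ ‖s‖ ^ n * (j * ‖mellin (fun t => Real.log t ^ (j - 1) • g t) s‖ +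
            ‖mellin (fun t => Real.log t ^ j • eulerCLM g t) s‖) := by
          rw [mul_mellin_log_pow_smul g j (ha.trans_le hsa), norm_neg]
          gcongr
          exact (norm_add_le _ _).trans_eq (by rw [norm_mul, Complex.norm_natCast])
      _ = j * (‖s‖ ^ n * ‖mellin (fun t => Real.log t ^ (j - 1) • g t) s‖) +
            ‖s‖ ^ n * ‖mellin (fun t => Real.log t ^ j • eulerCLM g t) s‖ := by ring
      _ ≤ j * C₁ + C₂ :=
          add_le_add (mul_le_mul_of_nonneg_left (hC₁ s hsa hsb) j.cast_nonneg) (hC₂ s hsa hsb)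

end SchwartzMap

theorem mellin_schwartz_vertical_strip_bound_general
    (f : SchwartzMap ℝ ℂ) (a b : ℝ) (ha : 0 < a) (n k : ℕ) :
    ∃ C > 0, ∀ s : ℂ, a ≤ s.re → s.re ≤ b →
      ‖s‖ ^ n * ‖iteratedDeriv k (mellin (⇑f)) s‖ ≤ C := by
  obtain ⟨C, hC⟩ := f.exists_bound_pow_mul_mellin_log_pow_smul ha b n k
  refine ⟨max C 1, by positivity, fun s hsa hsb => ?_⟩
  rw [f.iteratedDeriv_mellin k (ha.trans_le hsa)]
  exact (hC s hsa hsb).trans (le_max_left _ _)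

/-- For a Schwartz function `f : ℝ → ℂ`, reals `0 < a < b` and naturals
`n, k`, there is a constant `C > 0` such that for every `s ∈ ℂ` with `a ≤ Re s ≤ b` one has
`|s|^n * |(d/ds)^k f̃(s)| ≤ C`, where `f̃ = mellin f` is the Mellin transform of `f` and
`(d/ds)^k` is the `k`-th complex derivative. -/
theorem mellin_schwartz_vertical_strip_bound
    (f : SchwartzMap ℝ ℂ) (a b : ℝ) (ha : 0 < a) (hab : a < b) (n k : ℕ) :
    ∃ C > 0, ∀ s : ℂ, a ≤ s.re → s.re ≤ b →
      ‖s‖ ^ n * ‖iteratedDeriv k (mellin (⇑f)) s‖ ≤ C :=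
  mellin_schwartz_vertical_strip_bound_general f a b ha n k
end

section
/- Let f : ℝ → ℂ be a Schwartz function, let n, k be nonnegative integers, and let s ∈ ℂ with Re(s) > 0. Set g(x) = (log x)^k f(x) on (0,∞) and let D^n g denote the n-fold application of the Euler operator D h (x) = x h′(x). Then s^n · (d/ds)^k f̃(s) = (−1)^n ∫_0^∞ (D^n g)(x) x^{s−1} dx, where f̃(s) = ∫_0^∞ f(x) x^{s−1} dx is the Mellin transform of f; in particular |s^n (d/ds)^k f̃(s)| = |∫_0^∞ (D^n g)(x) x^{s−1} dx|. -/
open MeasureTheory Complex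

/-- The Euler operator `D h (x) = x * h'(x)`. -/
noncomputable def eulerD (h : ℝ → ℂ) : ℝ → ℂ := fun x => (x : ℂ) * deriv h x

/-! Call `h` *log-Schwartz* if on `(0, ∞)` it is a finite sum of functions `(log x)^j φ(x)` with
`φ` Schwartz. Such functions are `O(x^(-a))` at `∞` for every `a` and `O(x^(-b))` at `0⁺` for
every `b > 0`, so their Mellin transforms converge and are holomorphic on `Re s > 0`, with
`(d/ds) 𝓜h = 𝓜(log · h)`; this gives `(d/ds)^k 𝓜f = 𝓜((log x)^k f)`. The class is stable under
`D = x d/dx` (as `D(log · h) = h + log · Dh` and `x φ'` is Schwartz), and integrating by parts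
against `x^s`, whose boundary terms vanish by the decay, gives `𝓜(Dh)(s) = -s 𝓜h(s)`. -/

open Filter Asymptotics Set Topology

theorem mellin_eq_integral_mul (h : ℝ → ℂ) (s : ℂ) :
    mellin h s = ∫ x in Ioi (0 : ℝ), h x * (x : ℂ) ^ (s - 1) := by
  simp only [mellin, smul_eq_mul, mul_comm]

theorem tendsto_mul_cpow_of_isBigO {h : ℝ → ℂ} {l : Filter ℝ} {a : ℝ} {s : ℂ}
    (hpos : ∀ᶠ x in l, 0 < x) (hh : h =O[l] (· ^ (-a))) (hlim : Tendsto (· ^ (s.re - a)) l (𝓝 0)) :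
    Tendsto (fun x : ℝ => h x * (x : ℂ) ^ s) l (𝓝 0) := by
  have hcpow : (fun x : ℝ => (x : ℂ) ^ s) =O[l] (· ^ s.re) :=
    .of_norm_eventuallyLE <| by
      filter_upwards [hpos] with x hx
      rw [norm_cpow_eq_rpow_re_of_pos hx]
  refine (hh.mul hcpow).trans_tendsto (hlim.congr' ?_)
  filter_upwards [hpos] with x hx
  rw [← Real.rpow_add hx, neg_add_eq_sub]

/-- Only the values on `(0, ∞)` matter: `congr` is what makes the class closed under `eulerD`,
whose value at `0` is `0` rather than the one the derivative formula predicts. -/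
inductive LogSchwartz : (ℝ → ℂ) → Prop
  | schwartz (φ : SchwartzMap ℝ ℂ) : LogSchwartz φ
  | log_smul {h : ℝ → ℂ} : LogSchwartz h → LogSchwartz (fun x => Real.log x • h x)
  | add {h₁ h₂ : ℝ → ℂ} : LogSchwartz h₁ → LogSchwartz h₂ → LogSchwartz (h₁ + h₂)
  | congr {h₁ h₂ : ℝ → ℂ} : LogSchwartz h₁ → EqOn h₁ h₂ (Ioi 0) → LogSchwartz h₂

namespace LogSchwartz

variable {h : ℝ → ℂ}

theorem differentiableAt (hl : LogSchwartz h) {x : ℝ} (hx : 0 < x) :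
    DifferentiableAt ℝ h x := by
  induction hl with
  | schwartz φ => exact φ.differentiableAt
  | log_smul _ ih => exact (Real.differentiableAt_log hx.ne').smul ih
  | add _ _ ih₁ ih₂ => exact ih₁.add ih₂
  | congr _ heq ih =>
    exact ih.congr_of_eventuallyEq (heq.eventuallyEq_of_mem (Ioi_mem_nhds hx)).symm

theorem continuousOn (hl : LogSchwartz h) : ContinuousOn h (Ioi 0) :=
  fun _ hx => (hl.differentiableAt hx).continuousAt.continuousWithinAt

theorem isBigO_atTop (hl : LogSchwartz h) (a : ℝ) : h =O[atTop] (· ^ (-a)) := by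
  induction hl generalizing a with
  | schwartz φ =>
    refine ((φ.isBigO_cocompact_rpow (-a)).mono atTop_le_cocompact).congr' .rfl ?_
    filter_upwards [eventually_ge_atTop 0] with x hx
    rw [Real.norm_of_nonneg hx]
  | log_smul _ ih => exact isBigO_rpow_top_log_smul (lt_add_one a) (ih (a + 1))
  | add _ _ ih₁ ih₂ => exact (ih₁ a).add (ih₂ a)
  | congr _ heq ih =>
    exact (ih a).congr' (heq.eventuallyEq_of_mem (Ioi_mem_atTop 0)) .rfl

theorem isBigO_nhdsGT_zero (hl : LogSchwartz h) {b : ℝ} (hb : 0 < b) :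
    h =O[𝓝[>] 0] (· ^ (-b)) := by
  induction hl generalizing b with
  | schwartz φ =>
    have hone : (fun _ => (1 : ℝ)) =O[𝓝[>] 0] (fun x : ℝ => x ^ (-b)) :=
      ((isLittleO_one_left_iff ℝ).mpr (tendsto_norm_atTop_atTop.comp
        (tendsto_rpow_neg_nhdsGT_zero (neg_neg_iff_pos.mpr hb)))).isBigO
    exact ((φ.continuous.tendsto 0).isBigO_one ℝ).mono nhdsWithin_le_nhds |>.trans hone
  | log_smul _ ih => exact isBigO_rpow_zero_log_smul (half_lt_self hb) (ih (half_pos hb))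
  | add _ _ ih₁ ih₂ => exact (ih₁ hb).add (ih₂ hb)
  | congr _ heq ih =>
    exact (ih hb).congr' (heq.eventuallyEq_of_mem self_mem_nhdsWithin) .rfl

theorem mellinConvergent (hl : LogSchwartz h) {s : ℂ} (hs : 0 < s.re) : MellinConvergent h s :=
  mellinConvergent_of_isBigO_rpow (hl.continuousOn.locallyIntegrableOn measurableSet_Ioi)
    (hl.isBigO_atTop (s.re + 1)) (lt_add_one _) (hl.isBigO_nhdsGT_zero (half_pos hs))
    (half_lt_self hs)

theorem hasDerivAt_mellin (hl : LogSchwartz h) {s : ℂ} (hs : 0 < s.re) :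
    HasDerivAt (mellin h) (mellin (fun x => Real.log x • h x) s) s :=
  (mellin_hasDerivAt_of_isBigO_rpow (hl.continuousOn.locallyIntegrableOn measurableSet_Ioi)
    (hl.isBigO_atTop (s.re + 1)) (lt_add_one _) (hl.isBigO_nhdsGT_zero (half_pos hs))
    (half_lt_self hs)).2

theorem logPow_mul (hl : LogSchwartz h) (k : ℕ) :
    LogSchwartz (fun x => (Real.log x : ℂ) ^ k * h x) := by
  induction k with
  | zero => simpa using hl
  | succ k ih =>
    refine ih.log_smul.congr fun x _ => ?_
    simp only [real_smul, pow_succ]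
    ring

theorem iteratedDeriv_mellin (hl : LogSchwartz h) (k : ℕ) {s : ℂ} (hs : 0 < s.re) :
    iteratedDeriv k (mellin h) s = mellin (fun x => (Real.log x : ℂ) ^ k * h x) s := by
  induction k generalizing s with
  | zero => simp
  | succ k ih =>
    have hev : iteratedDeriv k (mellin h) =ᶠ[𝓝 s]
        mellin (fun x => (Real.log x : ℂ) ^ k * h x) := by
      filter_upwards [(isOpen_lt continuous_const continuous_re).mem_nhds hs] with z hz
      exact ih hz
    rw [iteratedDeriv_succ, hev.deriv_eq, ((hl.logPow_mul k).hasDerivAt_mellin hs).deriv]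
    congr 1
    funext x
    rw [real_smul, pow_succ]
    ring

theorem eulerD (hl : LogSchwartz h) : LogSchwartz (_root_.eulerD h) := by
  induction hl with
  | schwartz φ =>
    refine (schwartz (SchwartzMap.smulLeftCLM ℂ ofReal (SchwartzMap.derivCLM ℂ ℂ φ))).congr
      fun x _ => ?_
    simp [SchwartzMap.smulLeftCLM_apply_apply Function.Complex.hasTemperateGrowth_ofReal,
      _root_.eulerD]
  | @log_smul h hl ih =>
    refine (hl.add ih.log_smul).congr fun x (hx : 0 < x) => ?_
    have hd : HasDerivAt (fun y => Real.log y • h y)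
        (Real.log x • deriv h x + x⁻¹ • h x) x :=
      (Real.hasDerivAt_log hx.ne').smul (hl.differentiableAt hx).hasDerivAt
    simp only [_root_.eulerD, Pi.add_apply]
    rw [hd.deriv]
    have hx₀ : (x : ℂ) ≠ 0 := ofReal_ne_zero.mpr hx.ne'
    simp only [real_smul, ofReal_inv]
    field_simp
    ring
  | @add h₁ h₂ hl₁ hl₂ ih₁ ih₂ =>
    refine (ih₁.add ih₂).congr fun x (hx : 0 < x) => ?_
    simp only [_root_.eulerD, Pi.add_apply,
      deriv_add (hl₁.differentiableAt hx) (hl₂.differentiableAt hx), mul_add]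
  | @congr h₁ h₂ _ heq ih =>
    refine ih.congr fun x (hx : 0 < x) => ?_
    simp only [_root_.eulerD, (heq.eventuallyEq_of_mem (Ioi_mem_nhds hx)).deriv_eq]

theorem iterate_eulerD (hl : LogSchwartz h) (n : ℕ) : LogSchwartz (_root_.eulerD^[n] h) := by
  induction n with
  | zero => exact hl
  | succ n ih => simpa only [Function.iterate_succ_apply'] using ih.eulerD

theorem mellin_eulerD (hl : LogSchwartz h) {s : ℂ} (hs : 0 < s.re) :
    mellin (_root_.eulerD h) s = -s * mellin h s := by
  have hs₀ : s ≠ 0 := fun h₀ => by simp [h₀] at hs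
  have hcpow : ∀ x ∈ Ioi (0 : ℝ), HasDerivAt (fun y : ℝ => (y : ℂ) ^ s) (s * x ^ (s - 1)) x :=
    fun x hx => hasDerivAt_ofReal_cpow_const (ne_of_gt hx) hs₀
  have hD : EqOn (fun x : ℝ => (x : ℂ) ^ (s - 1) • _root_.eulerD h x)
      (fun x => deriv h x * (x : ℂ) ^ s) (Ioi 0) := fun x (hx : 0 < x) => by
    have hx₀ : (x : ℂ) ≠ 0 := ofReal_ne_zero.mpr hx.ne'
    simp only [_root_.eulerD, smul_eq_mul, cpow_sub _ _ hx₀, cpow_one]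
    field_simp
  have hh : EqOn (fun x : ℝ => s * ((x : ℂ) ^ (s - 1) • h x))
      (fun x => h x * (s * (x : ℂ) ^ (s - 1))) (Ioi 0) := fun x _ => by
    simp only [smul_eq_mul]
    ring
  have hparts := integral_Ioi_mul_deriv_eq_deriv_mul
    (fun x hx => (hl.differentiableAt hx).hasDerivAt) hcpow
    (IntegrableOn.congr_fun ((hl.mellinConvergent hs).const_mul s) hh measurableSet_Ioi)
    (IntegrableOn.congr_fun (hl.eulerD.mellinConvergent hs) hD measurableSet_Ioi)
    (tendsto_mul_cpow_of_isBigO self_mem_nhdsWithin (hl.isBigO_nhdsGT_zero (half_pos hs)) ?_)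
    (tendsto_mul_cpow_of_isBigO (eventually_gt_atTop 0) (hl.isBigO_atTop (s.re + 1)) ?_)
  · calc mellin (_root_.eulerD h) s = ∫ x in Ioi 0, deriv h x * (x : ℂ) ^ s :=
          setIntegral_congr_fun measurableSet_Ioi hD
      _ = -∫ x in Ioi 0, h x * (s * (x : ℂ) ^ (s - 1)) := by
          rw [hparts]
          ring
      _ = -s * mellin h s := by
          rw [mellin, neg_mul, ← integral_const_mul, setIntegral_congr_fun measurableSet_Ioi hh]
  · have hpos : 0 < s.re - s.re / 2 := by linarith
    simpa [Real.zero_rpow hpos.ne'] using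
      (Real.continuousAt_rpow_const 0 _ (.inr hpos.le)).tendsto.mono_left nhdsWithin_le_nhds
  · simpa using tendsto_rpow_neg_atTop one_pos

theorem mellin_eulerD_iterate (hl : LogSchwartz h) (n : ℕ) {s : ℂ} (hs : 0 < s.re) :
    mellin (_root_.eulerD^[n] h) s = (-s) ^ n * mellin h s := by
  induction n with
  | zero => simp
  | succ n ih =>
    rw [Function.iterate_succ_apply', (iterate_eulerD hl n).mellin_eulerD hs, ih, pow_succ]
    ring

end LogSchwartz

/-- For a Schwartz function `f : ℝ → ℂ`, naturals `n, k`, and `s ∈ ℂ` with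
`Re s > 0`, setting `g x = (log x)^k * f x`, one has
`s^n * (d/ds)^k f̃(s) = (-1)^n * ∫_0^∞ (Dⁿ g)(x) x^(s-1) dx`, where `f̃ = mellin f`; in
particular `|s^n (d/ds)^k f̃(s)| = |∫_0^∞ (Dⁿ g)(x) x^(s-1) dx|`. -/
theorem pow_mul_iteratedDeriv_mellin_eq_mellin_eulerD_iterate
    (f : SchwartzMap ℝ ℂ) (n k : ℕ) (s : ℂ) (hs : 0 < s.re) :
    s ^ n * iteratedDeriv k (mellin (⇑f)) s
      = (-1 : ℂ) ^ n *
        ∫ x in Set.Ioi (0 : ℝ),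
          (eulerD^[n] (fun x : ℝ => (Real.log x : ℂ) ^ k * f x)) x * (x : ℂ) ^ (s - 1) ∧
    ‖s ^ n * iteratedDeriv k (mellin (⇑f)) s‖
      = ‖∫ x in Set.Ioi (0 : ℝ),
          (eulerD^[n] (fun x : ℝ => (Real.log x : ℂ) ^ k * f x)) x * (x : ℂ) ^ (s - 1)‖ := by
  have hf := LogSchwartz.schwartz f
  have key : s ^ n * iteratedDeriv k (mellin f) s =
      (-1) ^ n * mellin (eulerD^[n] fun x : ℝ => (Real.log x : ℂ) ^ k * f x) s := by
    rw [hf.iteratedDeriv_mellin k hs, (hf.logPow_mul k).mellin_eulerD_iterate n hs,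
      ← mul_assoc, ← mul_pow]
    simp
  rw [← mellin_eq_integral_mul]
  refine ⟨key, ?_⟩
  rw [key, norm_mul, norm_pow, norm_neg, norm_one, one_pow, one_mul]
end
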